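/- Let g be a V_0-selector, i ∈ [1,ℓ], and X ⊆ Θ_i. For every tuple (φ_v)_{v∈X} such that φ_v ∈ ω_i^g(v) for each v ∈ X and (φ_v)_{v∈X} ∈ 𝒞^0, there exists an extension f of g such that φ_v = f_i(v) for all nodes v ∈ X. -/

import Mathlib

/-!
Choose for every `x ∈ X` an extension `F x` of `g` realizing `φ x` and glue these: outside
`V0`, play `F x` on the region `Ψ_{>i-1}(x)` and at those vertices of the bag of `x` where the
view of `F x` is not `?`. Regions of distinct nodes of `Θ_i` are disjoint and meet no other bag
of a node of `Θ_i`, and by `𝒞⁰` at most one node needs a given bag vertex, so these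
prescriptions never conflict. The view `f_i(x, s)` only depends on `f` at `s` and on
`Ψ_{>i-1}(x)`; hence the glued selector has the view `φ x` wherever it follows `F x`, and the
view `?` at the remaining vertices of the bag, where `φ x` is `?` as well.
-/

universe u v

/-- A leaf of a graph: a node with at most one neighbour. -/
def IsTreeLeaf {𝒱 : Type v} (T : SimpleGraph 𝒱) (x : 𝒱) : Prop :=
  (T.neighborSet x).Subsingleton

/-- `(T, B)` is a tree decomposition of the graph with vertex set `V` and edge
relation `E`. -/
def IsTreeDecomp {V : Type u} {𝒱 : Type v} (E : V → V → Prop) (T : SimpleGraph 𝒱)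
    (B : 𝒱 → Finset V) : Prop :=
  T.IsTree ∧ (∀ s t : V, E s t → ∃ x : 𝒱, s ∈ B x ∧ t ∈ B x) ∧
    ∀ s : V, (T.induce {x : 𝒱 | s ∈ B x}).Connected

/-- A nice (rooted) tree decomposition: every leaf has a singleton bag, every vertex
is the bag of some leaf, and along every tree edge one bag is obtained from the other
by adding exactly one vertex. -/
def IsNiceTD {V : Type u} {𝒱 : Type v} [DecidableEq V] (E : V → V → Prop)
    (T : SimpleGraph 𝒱) (B : 𝒱 → Finset V) (root : 𝒱) : Prop :=
  IsTreeDecomp E T B ∧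
  (∀ x : 𝒱, IsTreeLeaf T x → ∃ s : V, B x = {s}) ∧
  (∀ s : V, ∃ x : 𝒱, IsTreeLeaf T x ∧ B x = {s}) ∧
  ∀ x y : 𝒱, T.Adj x y →
    (∃ s : V, s ∉ B x ∧ B y = insert s (B x)) ∨ (∃ s : V, s ∉ B y ∧ B x = insert s (B y))

/-- A depth-first traversal `vs 1, …, vs ℓ` of the rooted tree `T`: it starts and ends
at the root, consecutive nodes are adjacent, and every oriented edge of `T` occurs
exactly once among consecutive pairs. -/
structure IsDFT {𝒱 : Type v} (T : SimpleGraph 𝒱) (root : 𝒱) (ℓ : ℕ) (vs : ℕ → 𝒱) :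
    Prop where
  one_le : 1 ≤ ℓ
  first : vs 1 = root
  last : vs ℓ = root
  adj : ∀ j : ℕ, 1 ≤ j → j < ℓ → T.Adj (vs j) (vs (j + 1))
  once : ∀ a b : 𝒱, T.Adj a b → ∃! j : ℕ, 1 ≤ j ∧ j < ℓ ∧ vs j = a ∧ vs (j + 1) = b

/-- `x` is an ancestor of `y` (w.r.t. `root`): `x` lies on the path from the root
to `y`.  (In a tree the path between two nodes is unique.) -/
def Anc {𝒱 : Type v} (T : SimpleGraph 𝒱) (root x y : 𝒱) : Prop :=
  ∀ p : T.Walk root y, p.IsPath → x ∈ p.support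

/-- `Θ_i`: the set of ancestors of `vs i`. -/
def Theta {𝒱 : Type v} (T : SimpleGraph 𝒱) (root : 𝒱) (vs : ℕ → 𝒱) (i : ℕ) : Set 𝒱 :=
  {x | Anc T root x (vs i)}

/-- `Θ_{≤ i} = ⋃_{1 ≤ j ≤ i} Θ_j`. -/
def ThetaLe {𝒱 : Type v} (T : SimpleGraph 𝒱) (root : 𝒱) (vs : ℕ → 𝒱) (i : ℕ) : Set 𝒱 :=
  {x | ∃ j : ℕ, 1 ≤ j ∧ j ≤ i ∧ x ∈ Theta T root vs j}

/-- `Ψ_i = ⋃_{x ∈ Θ_i} B x`. -/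
def Psi {V : Type u} {𝒱 : Type v} (T : SimpleGraph 𝒱) (root : 𝒱) (vs : ℕ → 𝒱)
    (B : 𝒱 → Finset V) (i : ℕ) : Set V :=
  {s | ∃ x ∈ Theta T root vs i, s ∈ B x}

/-- `Ψ_{≤ i} = ⋃_{1 ≤ j ≤ i} Ψ_j`. -/
def PsiLe {V : Type u} {𝒱 : Type v} (T : SimpleGraph 𝒱) (root : 𝒱) (vs : ℕ → 𝒱)
    (B : 𝒱 → Finset V) (i : ℕ) : Set V :=
  {s | ∃ j : ℕ, 1 ≤ j ∧ j ≤ i ∧ s ∈ Psi T root vs B j}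

/-- `x = n_i(w)`: `x` is the lowest ancestor of `w` belonging to `Θ_{≤ i}`. -/
def LowestAnc {𝒱 : Type v} (T : SimpleGraph 𝒱) (root : 𝒱) (vs : ℕ → 𝒱) (i : ℕ)
    (w x : 𝒱) : Prop :=
  Anc T root x w ∧ x ∈ ThetaLe T root vs i ∧
    ∀ y : 𝒱, Anc T root y w → y ∈ ThetaLe T root vs i → Anc T root y x

/-- `r = r(s)`: the node of `𝒯^s = {x | s ∈ B x}` closest to the root. -/
def IsBagRoot {V : Type u} {𝒱 : Type v} (T : SimpleGraph 𝒱) (root : 𝒱)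
    (B : 𝒱 → Finset V) (s : V) (r : 𝒱) : Prop :=
  s ∈ B r ∧ ∀ x : 𝒱, s ∈ B x → Anc T root r x

/-- `Ψ_{> i-1}(x) = {s ∈ Ψ_{> i-1} | n_i(s) = x}`, where `n_i(s) = n_i(r(s))`. -/
def PsiGtAt {V : Type u} {𝒱 : Type v} (T : SimpleGraph 𝒱) (root : 𝒱) (vs : ℕ → 𝒱)
    (B : 𝒱 → Finset V) (i : ℕ) (x : 𝒱) : Set V :=
  {s | s ∉ PsiLe T root vs B (i - 1) ∧
    ∃ r : 𝒱, IsBagRoot T root B s r ∧ LowestAnc T root vs i r x}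

/-- Possible values of a selector view: `?`, `⊤`, `⊥`, or an exit pair `(t, m)`. -/
inductive View (V : Type u) : Type u where
  | unk : View V
  | top : View V
  | bot : View V
  | exit : V → ℕ → View V

/-- The trace of the (partial) selector `f` from `s`: `iter f s n` is the `n`-th
vertex of the trace, if the trace is still defined at step `n`. -/
def iter {V : Type u} (f : V → Option V) (s : V) : ℕ → Option V
  | 0 => some s
  | n + 1 => (iter f s n).bind f

/-- `t` occurs infinitely often on the trace of `f` from `s`. -/
def infOcc {V : Type u} (f : V → Option V) (s t : V) : Prop :=
  ∀ N : ℕ, ∃ n : ℕ, N ≤ n ∧ iter f s n = some t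

/-- A parity game together with a tree decomposition and a depth-first traversal:
edge relation `E`, number of colors `C`, coloring `c`, set `V0` of vertices of
player `P₀` (`V1 = V0ᶜ`), tree `T` with bags `B`, depth-first traversal
`vs 1, …, vs len` and distinguished initial vertex `sigma`. -/
structure Setting (V : Type u) (𝒱 : Type v) where
  E : V → V → Prop
  C : ℕ
  c : V → ℕ
  V0 : Set V
  T : SimpleGraph 𝒱
  vs : ℕ → 𝒱
  len : ℕ
  sigma : V
  B : 𝒱 → Finset V

namespace Setting

variable {V : Type u} {𝒱 : Type v} (S : Setting V 𝒱)

/-- The root of the tree is the first node of the depth-first traversal. -/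
def root : 𝒱 := S.vs 1

/-- Standing assumptions: colors lie in `{1, …, C}`, `(T, B)` is a nice tree
decomposition of `(V, E)` rooted at `v₁` with bag `{σ}`, and `vs` is a
depth-first traversal of `T` of length `len`. -/
def Standing [DecidableEq V] : Prop :=
  (∀ s : V, 1 ≤ S.c s ∧ S.c s ≤ S.C) ∧
  IsNiceTD S.E S.T S.B S.root ∧
  IsDFT S.T S.root S.len S.vs ∧
  S.B S.root = {S.sigma}

def theta (i : ℕ) : Set 𝒱 := Theta S.T S.root S.vs i

def psi (i : ℕ) : Set V := Psi S.T S.root S.vs S.B i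

def psiLe (i : ℕ) : Set V := PsiLe S.T S.root S.vs S.B i

def psiGtAt (i : ℕ) (x : 𝒱) : Set V := PsiGtAt S.T S.root S.vs S.B i x

/-- The index `i` is critical: `Ψ_{>i} ⊊ Ψ_{>i-1}`. -/
def Crit (i : ℕ) : Prop := (S.psiLe i)ᶜ ⊂ (S.psiLe (i - 1))ᶜ

/-- `f` is a `W`-selector: a partial map with domain contained in `W` that follows
edges of the game. -/
def Sel (W : Set V) (f : V → Option V) : Prop :=
  ∀ s t : V, f s = some t → s ∈ W ∧ S.E s t

/-- The (maximal) trace of the `V`-selector `f` from `s` is winning for player `P₀`: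
either it is finite and its last vertex belongs to `V1 = V0ᶜ`, or it is infinite and
the maximal color occurring infinitely often along it is even. -/
def TraceWin (f : V → Option V) (s : V) : Prop :=
  (∃ (n : ℕ) (t : V), iter f s n = some t ∧ f t = none ∧ t ∉ S.V0) ∨
  ((∀ n : ℕ, iter f s n ≠ none) ∧
    ∃ m : ℕ, Even m ∧ (∃ t : V, infOcc f s t ∧ S.c t = m) ∧
      ∀ t : V, infOcc f s t → S.c t ≤ m)

/-- The selector view `f_i(x, s)` of the `V`-selector `f`: `S.SelView f i x s w`
means `f_i(x, s) = w`. -/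
def SelView (f : V → Option V) (i : ℕ) (x : 𝒱) (s : V) : View V → Prop := fun w =>
  match w with
  | View.unk =>
      (f s = none ∧ s ∉ S.psiGtAt i x) ∨ (∃ t : V, f s = some t ∧ t ∉ S.psiGtAt i x)
  | View.top =>
      (f s ≠ none ∨ s ∈ S.psiGtAt i x) ∧
      (∀ (n : ℕ) (t : V), 1 ≤ n → iter f s n = some t → t ∈ S.psiGtAt i x) ∧
      S.TraceWin f s
  | View.bot =>
      (f s ≠ none ∨ s ∈ S.psiGtAt i x) ∧
      (∀ (n : ℕ) (t : V), 1 ≤ n → iter f s n = some t → t ∈ S.psiGtAt i x) ∧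
      ¬ S.TraceWin f s
  | View.exit t m =>
      ∃ j : ℕ, 2 ≤ j ∧ iter f s j = some t ∧ t ∉ S.psiGtAt i x ∧
        (∀ (n : ℕ) (u : V), 1 ≤ n → n < j → iter f s n = some u → u ∈ S.psiGtAt i x) ∧
        (∃ (n : ℕ) (u : V), n < j ∧ iter f s n = some u ∧ S.c u = m) ∧
        (∀ (n : ℕ) (u : V), n < j → iter f s n = some u → S.c u ≤ m)

/-- The selector views `f_i(x)` and `g_i(x)` coincide (as functions on the bag of `x`). -/
def ViewEq (f g : V → Option V) (i : ℕ) (x : 𝒱) : Prop :=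
  ∀ s ∈ S.B x, ∀ w : View V, S.SelView f i x s w ↔ S.SelView g i x s w

/-- `f` is a `V`-selector extending the `V₀`-selector `g` (i.e. `g` is the
restriction of `f` to `V0`). -/
def Ext (f g : V → Option V) : Prop :=
  S.Sel Set.univ f ∧ (∀ s ∈ S.V0, g s = f s) ∧ ∀ s ∉ S.V0, g s = none

/-- The selector view `f_i(x)` of a `V`-selector, as a relation on the bag of `x`. -/
def viewOn (f : V → Option V) (i : ℕ) (x : 𝒱) : V → View V → Prop :=
  fun s w => s ∈ S.B x ∧ S.SelView f i x s w

/-- `ω_i^g(x) = { f_i(x) | f is an extension of g }`. -/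
def omega (g : V → Option V) (i : ℕ) (x : 𝒱) : Set (V → View V → Prop) :=
  {R | ∃ f : V → Option V, S.Ext f g ∧ R = S.viewOn f i x}

/-- The accessibility set `α_i^g`: vertices of `Ψ_i` reachable from `σ` along the
trace of some extension of `g`. -/
def alpha (g : V → Option V) (i : ℕ) : Set V :=
  {s | s ∈ S.psi i ∧ ∃ f : V → Option V, S.Ext f g ∧ ∃ k : ℕ, iter f S.sigma k = some s}

/-- The set `B(g)_{x,y} ⊆ {⊥, ⊤}` (with `false` for `⊥` and `true` for `⊤`). -/
def Bsel (g : V → Option V) (x y : V) : Set Bool :=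
  {b | (b = false ∧ (¬ S.E x y ∨ (x ∈ S.V0 ∧ g x = none) ∨
          (∃ z : V, g x = some z ∧ z ≠ y) ∨ (S.E x y ∧ x ∉ S.V0))) ∨
       (b = true ∧ (g x = some y ∨ (S.E x y ∧ x ∉ S.V0)))}

end Setting

namespace Anc

variable {𝒱 : Type v} {T : SimpleGraph 𝒱} {root x y z : 𝒱}

protected theorem refl : Anc T root x x := fun p _ => p.end_mem_support

protected theorem trans (hxy : Anc T root x y) (hyz : Anc T root y z) : Anc T root x z := by
  classical
  intro p hp
  have hy := hyz p hp
  exact p.support_takeUntil_subset_support hy (hxy _ (hp.takeUntil hy))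

protected theorem antisymm (hT : T.Connected) (hxy : Anc T root x y) (hyx : Anc T root y x) :
    x = y := by
  classical
  by_contra hne
  obtain ⟨p, hp⟩ := (hT.preconnected root y).some.toPath
  have hx : x ∈ p.support := hxy p hp
  have hy : y ∈ (p.takeUntil x hx).support := hyx _ (hp.takeUntil hx)
  have hnd := hp.support_nodup
  rw [← p.take_spec hx, SimpleGraph.Walk.support_append, List.nodup_append] at hnd
  have hy' : y ∈ (p.dropUntil x hx).support.tail := by
    have h := (p.dropUntil x hx).end_mem_support
    rw [← SimpleGraph.Walk.cons_tail_support] at h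
    exact (List.mem_cons.mp h).resolve_left (Ne.symm hne)
  exact hnd.2.2 y hy y hy' rfl

/-- The path from the root to `y` is the path to `x` followed by the edge `xy`, or conversely. -/
theorem or_of_adj (hT : T.IsTree) (h : T.Adj x y) : Anc T root x y ∨ Anc T root y x := by
  obtain ⟨Q, hQ, hQu⟩ := hT.existsUnique_path root x
  by_cases hy : y ∈ Q.support
  · exact Or.inr fun p hp => hQu p hp ▸ hy
  · have hP : (Q.concat h).IsPath := by
      rw [← SimpleGraph.Walk.isPath_reverse_iff, SimpleGraph.Walk.reverse_concat]
      exact hQ.reverse.cons (by simpa using hy)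
    refine Or.inl fun p hp => ?_
    obtain ⟨P, -, hPu⟩ := hT.existsUnique_path root y
    rw [hPu p hp, ← hPu _ hP, SimpleGraph.Walk.support_concat]
    exact List.mem_append_left _ Q.end_mem_support

theorem eq_or_anc_of_adj (hT : T.IsTree) (hadj : T.Adj y z) (hyz : Anc T root y z)
    (hx : Anc T root x z) : x = z ∨ Anc T root x y := by
  obtain ⟨Q, hQ, hQu⟩ := hT.existsUnique_path root y
  have hz : z ∉ Q.support := fun hz =>
    hadj.ne (hyz.antisymm hT.connected fun p hp => hQu p hp ▸ hz)
  have hP : (Q.concat hadj).IsPath := by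
    rw [← SimpleGraph.Walk.isPath_reverse_iff, SimpleGraph.Walk.reverse_concat]
    exact hQ.reverse.cons (by simpa using hz)
  have hxP := hx _ hP
  rw [SimpleGraph.Walk.support_concat, List.mem_append, List.mem_singleton] at hxP
  exact hxP.symm.imp id fun h p hp => hQu p hp ▸ h

end Anc

theorem IsDFT.exists_eq_of_anc {𝒱 : Type v} {T : SimpleGraph 𝒱} {root x : 𝒱} {ℓ : ℕ}
    {vs : ℕ → 𝒱} (hT : T.IsTree) (hD : IsDFT T root ℓ vs) {i : ℕ} (hi1 : 1 ≤ i) (hiℓ : i ≤ ℓ)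
    (hx : Anc T root x (vs i)) : ∃ j, 1 ≤ j ∧ j ≤ i ∧ vs j = x := by
  induction i, hi1 using Nat.le_induction generalizing x with
  | base =>
    rw [hD.first] at hx
    have hxr : x = root := by simpa using hx .nil .nil
    exact ⟨1, le_rfl, le_rfl, hD.first.trans hxr.symm⟩
  | succ n hn ih =>
    have hadj := hD.adj n hn (by omega)
    rcases Anc.or_of_adj (root := root) hT hadj with hdown | hup
    · rcases hdown.eq_or_anc_of_adj hT hadj hx with rfl | hxn
      · exact ⟨n + 1, by omega, le_rfl, rfl⟩
      · obtain ⟨j, hj1, hjn, hj⟩ := ih (by omega) hxn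
        exact ⟨j, hj1, by omega, hj⟩
    · obtain ⟨j, hj1, hjn, hj⟩ := ih (by omega) (hx.trans hup)
      exact ⟨j, hj1, by omega, hj⟩

section Trace

variable {V : Type u} {f f' : V → Option V} {s t : V} {n m : ℕ}

theorem iter_succ_of_eq_some (h : iter f s n = some t) : iter f s (n + 1) = f t := by
  rw [iter, h, Option.bind_some]

theorem iter_eq_none_of_le (h : iter f s n = none) (hnm : n ≤ m) : iter f s m = none := by
  induction m, hnm using Nat.le_induction with
  | base => exact h
  | succ m _ ih => rw [iter, ih, Option.bind_none]

theorem iter_eq_of_forall_lt (h : ∀ k < n, ∀ u, iter f' s k = some u → f u = f' u) :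
    iter f s n = iter f' s n := by
  induction n with
  | zero => rfl
  | succ n ih =>
    rw [iter, iter, ih fun k hk => h k (by omega)]
    cases hu : iter f' s n with
    | none => rfl
    | some u => exact h n (by omega) u hu

end Trace

namespace Setting

variable {V : Type u} {𝒱 : Type v} (S : Setting V 𝒱) {f f' : V → Option V} {i : ℕ}
  {x y : 𝒱} {s : V} {w : View V}

theorem traceWin_congr (h : ∀ n, iter f s n = iter f' s n) :
    S.TraceWin f s ↔ S.TraceWin f' s := by
  suffices ∀ f f' : V → Option V, (∀ n, iter f s n = iter f' s n) →
      S.TraceWin f s → S.TraceWin f' s from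
    ⟨this f f' h, this f' f fun n => (h n).symm⟩
  intro f f' h hw
  have hocc : ∀ t, infOcc f s t ↔ infOcc f' s t := fun t => by simp only [infOcc, h]
  rcases hw with ⟨n, t, hn, hend, hV1⟩ | ⟨hinf, m, hm, ⟨t, ht, htm⟩, hmax⟩
  · refine Or.inl ⟨n, t, h n ▸ hn, ?_, hV1⟩
    rw [← iter_succ_of_eq_some (f := f') (h n ▸ hn), ← h, iter_succ_of_eq_some hn, hend]
  · exact Or.inr ⟨fun n => h n ▸ hinf n, m, hm, ⟨t, (hocc t).1 ht, htm⟩,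
      fun u hu => hmax u ((hocc u).2 hu)⟩

theorem selView_of_eqOn (hR : Set.EqOn f f' (S.psiGtAt i x)) (hs : f s = f' s)
    (h : S.SelView f i x s w) : S.SelView f' i x s w := by
  have hiter : ∀ n, (∀ k u, 1 ≤ k → k < n → iter f s k = some u → u ∈ S.psiGtAt i x) →
      iter f s n = iter f' s n := by
    refine fun n hin => (iter_eq_of_forall_lt fun k hk u hu => ?_).symm
    rcases Nat.eq_zero_or_pos k with rfl | hk1
    · cases hu
      exact hs.symm
    · exact (hR (hin k u hk1 hk hu)).symm
  cases w with
  | unk => rwa [SelView, ← hs]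
  | top | bot =>
    obtain ⟨h1, h2, h3⟩ := h
    have hall : ∀ n, iter f s n = iter f' s n := fun n =>
      hiter n fun k u hk _ hu => h2 k u hk hu
    refine ⟨hs ▸ h1, fun n t hn ht => h2 n t hn (hall n ▸ ht), ?_⟩
    rwa [← S.traceWin_congr hall]
  | exit t m =>
    obtain ⟨j, hj, hjt, htR, hin, ⟨n₀, u₀, hn₀, hu₀, hcu₀⟩, hmax⟩ := h
    have hle : ∀ n ≤ j, iter f s n = iter f' s n := fun n hn =>
      hiter n fun k u hk hkn hu => hin k u hk (by omega) hu
    exact ⟨j, hj, hle j le_rfl ▸ hjt, htR,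
      fun n u h1 h2 hu => hin n u h1 h2 (hle n h2.le ▸ hu),
      ⟨n₀, u₀, hn₀, hle n₀ hn₀.le ▸ hu₀, hcu₀⟩,
      fun n u hn hu => hmax n u hn (hle n hn.le ▸ hu)⟩

theorem selView_congr (hR : Set.EqOn f f' (S.psiGtAt i x)) (hs : f s = f' s) :
    S.SelView f i x s w ↔ S.SelView f' i x s w :=
  ⟨S.selView_of_eqOn hR hs, S.selView_of_eqOn hR.symm hs.symm⟩

theorem not_selView_of_unk (h : S.SelView f i x s View.unk) (hw : w ≠ View.unk) :
    ¬ S.SelView f i x s w := by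
  intro hw'
  rcases h with ⟨hnone, hsR⟩ | ⟨t, ht, htR⟩
  · cases w with
    | unk => exact hw rfl
    | top | bot => exact hw'.1.elim (· hnone) hsR
    | exit =>
      obtain ⟨j, hj, hjt, -⟩ := hw'
      rw [iter_eq_none_of_le (n := 1) hnone (by omega)] at hjt
      cases hjt
  · have ht1 : iter f s 1 = some t := ht
    cases w with
    | unk => exact hw rfl
    | top | bot => exact htR (hw'.2.1 1 t le_rfl ht1)
    | exit =>
      obtain ⟨j, hj, -, -, hin, -⟩ := hw'
      exact htR (hin 1 t le_rfl (by omega) ht1)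

theorem exists_eq_some_mem_of_not_selView_unk (h : ¬ S.SelView f i x s View.unk)
    (hs : s ∉ S.psiGtAt i x) : ∃ t, f s = some t ∧ t ∈ S.psiGtAt i x := by
  cases hf : f s with
  | none => exact absurd (Or.inl ⟨hf, hs⟩) h
  | some t => exact ⟨t, rfl, by_contra fun ht => h (Or.inr ⟨t, hf, ht⟩)⟩

theorem eq_of_mem_psiGtAt (hT : S.T.Connected) (hx : s ∈ S.psiGtAt i x)
    (hy : s ∈ S.psiGtAt i y) : x = y := by
  obtain ⟨-, r, hr, hrx⟩ := hx
  obtain ⟨-, r', hr', hry⟩ := hy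
  obtain rfl : r = r' := (hr.2 r' hr'.1).antisymm hT (hr'.2 r hr.1)
  exact (hry.2.2 x hrx.1 hrx.2.1).antisymm hT (hrx.2.2 y hry.1 hry.2.1)

/-- The root `r(s)` of the bags containing `s` is an ancestor of `y`, hence lies in `Θ_i`, so
`x = r(s)`; were it strictly above `y`, the traversal would have visited it before step `i`,
putting `s` into `Ψ_{≤ i-1}`. -/
theorem eq_of_mem_psiGtAt_of_mem_bag (hT : S.T.IsTree) (hD : IsDFT S.T S.root S.len S.vs)
    (hi1 : 1 ≤ i) (hi2 : i ≤ S.len) (hs : s ∈ S.psiGtAt i x) (hy : y ∈ S.theta i)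
    (hsy : s ∈ S.B y) : x = y := by
  obtain ⟨hs_new, r, hr, hrx⟩ := hs
  have hry : Anc S.T S.root r y := hr.2 y hsy
  have hri : Anc S.T S.root r (S.vs i) := hry.trans hy
  obtain rfl : x = r := hrx.1.antisymm hT.connected (hrx.2.2 r .refl ⟨i, hi1, le_rfl, hri⟩)
  by_contra hxy
  obtain ⟨j, hj1, hji, rfl⟩ := hD.exists_eq_of_anc hT hi1 hi2 hri
  have hji' : j ≠ i := by
    rintro rfl
    exact hxy (hry.antisymm hT.connected hy)
  exact hs_new ⟨j, hj1, by omega, S.vs j, .refl, hr.1⟩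

section Glue

variable (g : V → Option V) (F : 𝒱 → V → Option V) (i : ℕ) (X : Set 𝒱)

/-- `((F x)_i(x))_{x ∈ X} ∈ 𝒞⁰`. -/
def ViewsCompatible : Prop :=
  ∀ x ∈ X, ∀ y ∈ X, x ≠ y → ∀ s ∈ S.B x, s ∈ S.B y →
    S.SelView (F x) i x s View.unk ∨ S.SelView (F y) i y s View.unk

/-- The vertices where a selector has to follow `F x` to keep the view `(F x)_i(x)`. -/
def Claims (x : 𝒱) (s : V) : Prop :=
  s ∈ S.psiGtAt i x ∨ (s ∈ S.B x ∧ ¬ S.SelView (F x) i x s View.unk)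

open Classical in
/-- By `claims_unique`, the choice of the claiming node is irrelevant. -/
noncomputable def glue (s : V) : Option V :=
  if s ∈ S.V0 then g s else if h : ∃ x ∈ X, S.Claims F i x s then F h.choose s else none

variable {g F i X}

theorem claims_unique (hT : S.T.IsTree) (hD : IsDFT S.T S.root S.len S.vs) (hi1 : 1 ≤ i)
    (hi2 : i ≤ S.len) (hX : X ⊆ S.theta i) (hF : S.ViewsCompatible F i X) (hx : x ∈ X)
    (hy : y ∈ X) (hxs : S.Claims F i x s) (hys : S.Claims F i y s) : x = y := by
  rcases hxs with hxs | ⟨hxs, hxu⟩ <;> rcases hys with hys | ⟨hys, hyu⟩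
  · exact S.eq_of_mem_psiGtAt hT.connected hxs hys
  · exact S.eq_of_mem_psiGtAt_of_mem_bag hT hD hi1 hi2 hxs (hX hy) hys
  · exact (S.eq_of_mem_psiGtAt_of_mem_bag hT hD hi1 hi2 hys (hX hx) hxs).symm
  · by_contra hxy
    exact (hF x hx y hy hxy s hxs hys).elim hxu hyu

theorem ext_glue (hg : S.Sel S.V0 g) (hext : ∀ x ∈ X, S.Ext (F x) g) :
    S.Ext (S.glue g F i X) g := by
  refine ⟨fun s t hst => ⟨trivial, ?_⟩, fun s hs => by simp [glue, hs],
    fun s hs => Option.eq_none_iff_forall_ne_some.2 fun t ht => hs (hg s t ht).1⟩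
  unfold glue at hst
  split_ifs at hst with hs h
  · exact (hg s t hst).2
  · exact ((hext _ h.choose_spec.1).1 s t hst).2

variable (hT : S.T.IsTree) (hD : IsDFT S.T S.root S.len S.vs) (hi1 : 1 ≤ i) (hi2 : i ≤ S.len)
  (hX : X ⊆ S.theta i) (hF : S.ViewsCompatible F i X) (hext : ∀ x ∈ X, S.Ext (F x) g)
include hT hD hi1 hi2 hX hF hext

theorem glue_eq_of_claims (hx : x ∈ X) (hxs : S.Claims F i x s) : S.glue g F i X s = F x s := by
  by_cases hs : s ∈ S.V0
  · simp only [glue, if_pos hs, (hext x hx).2.1 s hs]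
  · have h : ∃ y ∈ X, S.Claims F i y s := ⟨x, hx, hxs⟩
    rw [glue, if_neg hs, dif_pos h,
      S.claims_unique hT hD hi1 hi2 hX hF h.choose_spec.1 hx h.choose_spec.2 hxs]

/-- Where `glue` deviates from `F x` on the bag of `x`, it moves to a vertex claimed by
another node `y`, whose region is disjoint from that of `x`. -/
theorem selView_glue_unk (hx : x ∈ X) (hs : s ∈ S.B x) (hne : S.glue g F i X s ≠ F x s) :
    S.SelView (S.glue g F i X) i x s View.unk := by
  have hsx : s ∉ S.psiGtAt i x := fun h =>
    hne (S.glue_eq_of_claims hT hD hi1 hi2 hX hF hext hx (Or.inl h))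
  have hsV0 : s ∉ S.V0 := fun h => hne (by simp only [glue, if_pos h, (hext x hx).2.1 s h])
  by_cases hc : ∃ y ∈ X, S.Claims F i y s
  · obtain ⟨y, hy, hys⟩ := hc
    have hxy : y ≠ x := by
      rintro rfl
      exact hne (S.glue_eq_of_claims hT hD hi1 hi2 hX hF hext hy hys)
    have hsy : s ∉ S.psiGtAt i y := fun h =>
      hxy (S.eq_of_mem_psiGtAt_of_mem_bag hT hD hi1 hi2 h (hX hx) hs)
    obtain ⟨t, ht, hty⟩ := S.exists_eq_some_mem_of_not_selView_unk
      (hys.resolve_left hsy).2 hsy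
    refine Or.inr ⟨t, ?_, fun htx => hxy (S.eq_of_mem_psiGtAt hT.connected hty htx)⟩
    rw [S.glue_eq_of_claims hT hD hi1 hi2 hX hF hext hy hys, ht]
  · exact Or.inl ⟨by simp only [glue, if_neg hsV0, dif_neg hc], hsx⟩

theorem selView_glue_iff (hx : x ∈ X) (hs : s ∈ S.B x) :
    S.SelView (S.glue g F i X) i x s w ↔ S.SelView (F x) i x s w := by
  by_cases hne : S.glue g F i X s = F x s
  · exact S.selView_congr (fun u hu => S.glue_eq_of_claims hT hD hi1 hi2 hX hF hext hx
      (Or.inl hu)) hne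
  have hglue := S.selView_glue_unk hT hD hi1 hi2 hX hF hext hx hs hne
  have hFx : S.SelView (F x) i x s View.unk := by_contra fun h =>
    hne (S.glue_eq_of_claims hT hD hi1 hi2 hX hF hext hx (Or.inr ⟨hs, h⟩))
  by_cases hw : w = View.unk
  · subst hw
    exact iff_of_true hglue hFx
  · exact iff_of_false (S.not_selView_of_unk hglue hw) (S.not_selView_of_unk hFx hw)

end Glue

end Setting

theorem omega_simultaneous_realization_general {V : Type u} {𝒱 : Type v}
    [DecidableEq V]
    (S : Setting V 𝒱) (hS : S.Standing)
    (g : V → Option V) (hg : S.Sel S.V0 g)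
    (i : ℕ) (hi1 : 1 ≤ i) (hi2 : i ≤ S.len)
    (X : Set 𝒱) (hX : X ⊆ S.theta i)
    (φ : 𝒱 → V → View V → Prop)
    (hmem : ∀ x ∈ X, φ x ∈ S.omega g i x)
    (hC0 : ∀ x ∈ X, ∀ y ∈ X, x ≠ y → ∀ s : V, s ∈ S.B x → s ∈ S.B y →
      (φ x s View.unk ∨ φ y s View.unk)) :
    ∃ f : V → Option V, S.Ext f g ∧ ∀ x ∈ X, φ x = S.viewOn f i x := by
  obtain ⟨-, ⟨⟨hT, -⟩, -⟩, hD, -⟩ := hS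
  have hchoice : ∀ x, ∃ f, x ∈ X → S.Ext f g ∧ φ x = S.viewOn f i x := fun x => by
    by_cases hx : x ∈ X
    · obtain ⟨f, hf, hφ⟩ := hmem x hx
      exact ⟨f, fun _ => ⟨hf, hφ⟩⟩
    · exact ⟨g, fun h => absurd h hx⟩
  choose F hF using hchoice
  have hext : ∀ x ∈ X, S.Ext (F x) g := fun x hx => (hF x hx).1
  have hcompat : S.ViewsCompatible F i X := fun x hx y hy hxy s hsx hsy => by
    simpa only [(hF x hx).2, (hF y hy).2, Setting.viewOn, hsx, hsy, true_and]
      using hC0 x hx y hy hxy s hsx hsy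
  refine ⟨S.glue g F i X, S.ext_glue hg hext, fun x hx => ?_⟩
  ext s w
  rw [(hF x hx).2]
  exact and_congr_right fun hs =>
    (S.selView_glue_iff hT hD hi1 hi2 hX hcompat hext hx hs).symm

/-- Every compatible tuple of views chosen from the sets `ω_i^g(x)`
(for `x` in a subset `X` of `Θ_i`) is realized by a single extension `f` of `g`. -/
theorem omega_simultaneous_realization {V : Type u} {𝒱 : Type v}
    [Fintype V] [DecidableEq V] [Fintype 𝒱]
    (S : Setting V 𝒱) (hS : S.Standing)
    (g : V → Option V) (hg : S.Sel S.V0 g)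
    (i : ℕ) (hi1 : 1 ≤ i) (hi2 : i ≤ S.len)
    (X : Set 𝒱) (hX : X ⊆ S.theta i)
    (φ : 𝒱 → V → View V → Prop)
    (hmem : ∀ x ∈ X, φ x ∈ S.omega g i x)
    (hC0 : ∀ x ∈ X, ∀ y ∈ X, x ≠ y → ∀ s : V, s ∈ S.B x → s ∈ S.B y →
      (φ x s View.unk ∨ φ y s View.unk)) :
    ∃ f : V → Option V, S.Ext f g ∧ ∀ x ∈ X, φ x = S.viewOn f i x :=
  omega_simultaneous_realization_general S hS g hg i hi1 hi2 X hX φ hmem hC0
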